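/- In the Game of Information Ownership as given, Alice strictly prefers not to share her secret: her expected payoff at the equilibrium (a?T:B, b?N:F, c?L:R) without sharing is 6, while if she shares with Bob, Bob can force the equilibrium (M,I,C) (by forwarding a to Carol) where Alice's payoff is only 2. -/

import Mathlib

inductive ACh | T | M | B
  deriving DecidableEq
instance : Fintype ACh := ⟨{.T, .M, .B}, fun x => by cases x <;> decide⟩
inductive BCh | N | I | F
  deriving DecidableEq
instance : Fintype BCh := ⟨{.N, .I, .F}, fun x => by cases x <;> decide⟩
inductive CCh | L | Cc | R
  deriving DecidableEq
instance : Fintype CCh := ⟨{.L, .Cc, .R}, fun x => by cases x <;> decide⟩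

def gACa : ACh → CCh → ℚ
  | .T, .L => 10
  | .T, .Cc => 0
  | .T, .R => 0
  | .M, .L => 2
  | .M, .Cc => 2
  | .M, .R => 2
  | .B, .L => 0
  | .B, .Cc => 0
  | .B, .R => 10

def gACc : ACh → CCh → ℚ
  | .T, .L => 0
  | .T, .Cc => 2
  | .T, .R => 10
  | .M, .L => 0
  | .M, .Cc => 2
  | .M, .R => 0
  | .B, .L => 10
  | .B, .Cc => 2
  | .B, .R => 0

def gABa : ACh → BCh → ℚ
  | .T, .N => 2
  | .T, .I => 0
  | .T, .F => 0
  | .M, .N => 0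
  | .M, .I => 0
  | .M, .F => 0
  | .B, .N => 0
  | .B, .I => 0
  | .B, .F => 2

def gABb : ACh → BCh → ℚ
  | .T, .N => 2
  | .T, .I => 0
  | .T, .F => 0
  | .M, .N => 0
  | .M, .I => 0
  | .M, .F => 0
  | .B, .N => 0
  | .B, .I => 0
  | .B, .F => 2

def gBCb : BCh → CCh → ℚ
  | .N, .L => 0
  | .N, .Cc => 0
  | .N, .R => 0
  | .I, .L => 0
  | .I, .Cc => 10
  | .I, .R => 0
  | .F, .L => 0
  | .F, .Cc => 0
  | .F, .R => 0

def gBCc : BCh → CCh → ℚ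
  | .N, .L => 0
  | .N, .Cc => 0
  | .N, .R => 0
  | .I, .L => 0
  | .I, .Cc => 0
  | .I, .R => 0
  | .F, .L => 0
  | .F, .Cc => 0
  | .F, .R => 0

def uA (x : ACh) (y : BCh) (z : CCh) : ℚ := gACa x z + gABa x y
def uB (x : ACh) (y : BCh) (z : CCh) : ℚ := gABb x y + gBCb y z
def uC (x : ACh) (y : BCh) (z : CCh) : ℚ := gACc x z + gBCc y z

-- each player knows only their own secret
def EUk (u : ACh → BCh → CCh → ℚ)
    (sA : Bool → ACh) (sB : Bool → BCh) (sC : Bool → CCh) : ℚ :=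
  (∑ a : Bool, ∑ b : Bool, ∑ c : Bool, u (sA a) (sB b) (sC c)) / 8

def NashK (sA : Bool → ACh) (sB : Bool → BCh) (sC : Bool → CCh) : Prop :=
  (∀ sA', EUk uA sA' sB sC ≤ EUk uA sA sB sC) ∧
  (∀ sB', EUk uB sA sB' sC ≤ EUk uB sA sB sC) ∧
  (∀ sC', EUk uC sA sB sC' ≤ EUk uC sA sB sC)

-- a shared: Bob knows (a,b), Carol knows (a,c)
def EUs (u : ACh → BCh → CCh → ℚ)
    (sA : Bool → ACh) (sB : Bool → Bool → BCh) (sC : Bool → Bool → CCh) : ℚ :=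
  (∑ a : Bool, ∑ b : Bool, ∑ c : Bool, u (sA a) (sB a b) (sC a c)) / 8

def NashS (sA : Bool → ACh) (sB : Bool → Bool → BCh) (sC : Bool → Bool → CCh) : Prop :=
  (∀ sA', EUs uA sA' sB sC ≤ EUs uA sA sB sC) ∧
  (∀ sB', EUs uB sA sB' sC ≤ EUs uB sA sB sC) ∧
  (∀ sC', EUs uC sA sB sC' ≤ EUs uC sA sB sC)

def sAstar : Bool → ACh := fun a => if a then .T else .B
def sBstar : Bool → BCh := fun b => if b then .N else .F
def sCstar : Bool → CCh := fun c => if c then .L else .R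

/-! Without sharing the signals are independent, so a profile is an equilibrium as soon as every
action is an interim best response to the others' average play. Against the uniform mixtures
`T/B`, `N/F`, `L/R` each player's two prescribed actions tie and beat the third (Bob's `I` pays
nothing because Carol never plays `Cc`). Once Alice shares, `(M, I, Cc)` is a pure Nash
equilibrium of the stage game, and a constant profile at a pure equilibrium is an equilibrium
under every information structure; there Alice only gets `gACa M Cc = 2`. -/

def IsPureNash (x : ACh) (y : BCh) (z : CCh) : Prop :=
  (∀ x', uA x' y z ≤ uA x y z) ∧ (∀ y', uB x y' z ≤ uB x y z) ∧ (∀ z', uC x y z' ≤ uC x y z)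

section Unshared

variable {u : ACh → BCh → CCh → ℚ} {sA : Bool → ACh} {sB : Bool → BCh} {sC : Bool → CCh}

theorem EUk_le_of_interim_best_A
    (h : ∀ a x, ∑ b, ∑ c, u x (sB b) (sC c) ≤ ∑ b, ∑ c, u (sA a) (sB b) (sC c))
    (sA' : Bool → ACh) : EUk u sA' sB sC ≤ EUk u sA sB sC :=
  div_le_div_of_nonneg_right (Finset.sum_le_sum fun a _ => h a (sA' a)) (by norm_num)

theorem EUk_le_of_interim_best_B
    (h : ∀ b y, ∑ a, ∑ c, u (sA a) y (sC c) ≤ ∑ a, ∑ c, u (sA a) (sB b) (sC c))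
    (sB' : Bool → BCh) : EUk u sA sB' sC ≤ EUk u sA sB sC := by
  have reorder : ∀ s : Bool → BCh,
      ∑ a, ∑ b, ∑ c, u (sA a) (s b) (sC c) = ∑ b, ∑ a, ∑ c, u (sA a) (s b) (sC c) :=
    fun _ => Finset.sum_comm
  unfold EUk
  rw [reorder, reorder]
  exact div_le_div_of_nonneg_right (Finset.sum_le_sum fun b _ => h b (sB' b)) (by norm_num)

theorem EUk_le_of_interim_best_C
    (h : ∀ c z, ∑ a, ∑ b, u (sA a) (sB b) z ≤ ∑ a, ∑ b, u (sA a) (sB b) (sC c))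
    (sC' : Bool → CCh) : EUk u sA sB sC' ≤ EUk u sA sB sC := by
  have reorder : ∀ s : Bool → CCh,
      ∑ a, ∑ b, ∑ c, u (sA a) (sB b) (s c) = ∑ c, ∑ a, ∑ b, u (sA a) (sB b) (s c) := fun _ => by
    rw [Finset.sum_congr rfl fun _ _ => Finset.sum_comm]
    exact Finset.sum_comm
  unfold EUk
  rw [reorder, reorder]
  exact div_le_div_of_nonneg_right (Finset.sum_le_sum fun c _ => h c (sC' c)) (by norm_num)

end Unshared

theorem nashK_star : NashK sAstar sBstar sCstar := by
  refine ⟨EUk_le_of_interim_best_A fun a x => ?_, EUk_le_of_interim_best_B fun b y => ?_,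
    EUk_le_of_interim_best_C fun c z => ?_⟩
  · cases a <;> cases x <;> norm_num [Fintype.sum_bool, uA, gACa, gABa, sAstar, sBstar, sCstar]
  · cases b <;> cases y <;> norm_num [Fintype.sum_bool, uB, gABb, gBCb, sAstar, sBstar, sCstar]
  · cases c <;> cases z <;> norm_num [Fintype.sum_bool, uC, gACc, gBCc, sAstar, sBstar, sCstar]

theorem EUk_uA_star : EUk uA sAstar sBstar sCstar = 6 := by
  norm_num [EUk, Fintype.sum_bool, uA, gACa, gABa, sAstar, sBstar, sCstar]

section Shared

variable {u : ACh → BCh → CCh → ℚ}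

theorem EUs_const (x : ACh) (y : BCh) (z : CCh) :
    EUs u (fun _ => x) (fun _ _ => y) (fun _ _ => z) = u x y z := by
  simp only [EUs, Finset.sum_const, Finset.card_univ, Fintype.card_bool, nsmul_eq_mul]
  ring

theorem EUs_le_of_forall_le {sA : Bool → ACh} {sB : Bool → Bool → BCh} {sC : Bool → Bool → CCh}
    {v : ℚ} (h : ∀ a b c, u (sA a) (sB a b) (sC a c) ≤ v) : EUs u sA sB sC ≤ v := by
  have hsum : ∑ a : Bool, ∑ b : Bool, ∑ c : Bool, u (sA a) (sB a b) (sC a c) ≤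
      ∑ _a : Bool, ∑ _b : Bool, ∑ _c : Bool, v :=
    Finset.sum_le_sum fun a _ => Finset.sum_le_sum fun b _ => Finset.sum_le_sum fun c _ => h a b c
  simp only [Finset.sum_const, Finset.card_univ, Fintype.card_bool, nsmul_eq_mul,
    Nat.cast_ofNat] at hsum
  rw [EUs, div_le_iff₀ (by norm_num)]
  linarith

theorem nashS_const_of_isPureNash {x : ACh} {y : BCh} {z : CCh} (h : IsPureNash x y z) :
    NashS (fun _ => x) (fun _ _ => y) (fun _ _ => z) := by
  obtain ⟨hA, hB, hC⟩ := h
  refine ⟨fun _ => ?_, fun _ => ?_, fun _ => ?_⟩ <;> rw [EUs_const] <;>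
    exact EUs_le_of_forall_le fun _ _ _ => by simp only [hA, hB, hC]

end Shared

theorem isPureNash_M_I_Cc : IsPureNash .M .I .Cc := by
  refine ⟨fun x => ?_, fun y => ?_, fun z => ?_⟩
  · cases x <;> norm_num [uA, gACa, gABa]
  · cases y <;> norm_num [uB, gABb, gBCb]
  · cases z <;> norm_num [uC, gACc, gBCc]

/-- Game of Information Ownership: not sharing gives Alice 6 at the equilibrium
(a?T:B, b?N:F, c?L:R); if she shares, Bob can force (M,I,C) where Alice gets only 2. -/
theorem ownership_no_sharing :
    NashK sAstar sBstar sCstar ∧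
    EUk uA sAstar sBstar sCstar = 6 ∧
    NashS (fun _ => .M) (fun _ _ => .I) (fun _ _ => .Cc) ∧
    EUs uA (fun _ => .M) (fun _ _ => .I) (fun _ _ => .Cc) = 2 ∧
    (2 : ℚ) < 6 :=
  ⟨nashK_star, EUk_uA_star, nashS_const_of_isPureNash isPureNash_M_I_Cc,
    by norm_num [EUs_const, uA, gACa, gABa], by norm_num⟩
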